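/- The measure P = (1/N)P_a + ((N−1)/N)P_b on {−1,1}^N (N even, P_a uniform on constant sign vectors, P_b uniform on balanced sign vectors) is 3-wise independent: its projection onto any three distinct coordinates is the uniform measure on {−1,1}³. Consequently, C(N,p,3) = N^{1/2−1/p} for N even and p ≥ 2. -/

import Mathlib

/-!
Writing the indicator of a sign pattern as `∏ᵢ (1 + σᵢ εᵢ) / 2` and expanding the product shows that
±1-valued variables are `k`-wise independent as soon as all products `∏_{i ∈ B} εᵢ` with
`1 ≤ |B| ≤ k` have mean zero (and conversely, by strong induction on `B`).

For `P`, products over an odd number of coordinates have mean zero because `P_a` and `P_b` are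
invariant under `x ↦ -x` (for even `N`, complementing a balanced set keeps it balanced). For a pair
`i ≠ j`, `P_a` gives `E xᵢxⱼ = 1`, while under `P_b` the identity `∑ₗ xₗ = 0` together with the
invariance under permutations fixing `i` gives `E xᵢxⱼ = -1/(N-1)`; the weights `1/N` and
`(N-1)/N` are exactly those that make the two cancel.

For the constant, pairwise independence gives `E S² = ∑ aᵢ² = 1` for `S = ∑ aᵢεᵢ`, and
Cauchy–Schwarz gives `|S| ≤ √N`, so `E|S|^p ≤ N^{(p-2)/2} E S² = N^{p/2-1}`. Under `P` with
`aᵢ = N^{-1/2}`, `|S| = √N` on the support of `P_a` and `S = 0` on that of `P_b`, so the bound is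
attained.
-/

open MeasureTheory ENNReal

noncomputable section

/-- A family `ε` of ±1-valued (Rademacher) random variables which is `k`-wise independent:
every collection of at most `k` coordinates takes any prescribed pattern of signs with
probability `(1/2)^(number of coordinates)`. -/
def IsKWiseRademacher {Ω : Type*} [MeasurableSpace Ω] (μ : Measure Ω)
    {ι : Type*} [DecidableEq ι] (k : ℕ) (ε : ι → Ω → ℝ) : Prop :=
  (∀ i, Measurable (ε i)) ∧
  ∀ s : Finset ι, s.card ≤ k → ∀ σ : ι → ℝ, (∀ i, σ i = 1 ∨ σ i = -1) →
    μ {ω | ∀ i ∈ s, ε i ω = σ i} = (2 : ℝ≥0∞)⁻¹ ^ s.card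

/-- `PA N`: uniform measure on the two constant sign vectors `(1,…,1)` and `(−1,…,−1)`. -/
def PA (N : ℕ) : Measure (Fin N → ℝ) :=
  (2 : ℝ≥0∞)⁻¹ • (Measure.dirac (fun _ => 1) + Measure.dirac (fun _ => -1))

/-- `PB N`: uniform measure on the sign vectors with exactly `N/2` coordinates equal to `1`. -/
def PB (N : ℕ) : Measure (Fin N → ℝ) :=
  ((N.choose (N / 2) : ℝ≥0∞))⁻¹ •
    ∑ T ∈ Finset.univ.filter (fun T : Finset (Fin N) => T.card = N / 2),
      Measure.dirac (fun i => if i ∈ T then (1 : ℝ) else -1)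

/-- The measure `P = (1/N) P_a + ((N-1)/N) P_b` on `{−1,1}^N`. -/
def PMeas (N : ℕ) : Measure (Fin N → ℝ) :=
  (N : ℝ≥0∞)⁻¹ • PA N + (((N : ℝ≥0∞) - 1) / N) • PB N

/-- `CNpk N p k` : the best constant in the upper Khintchine inequality with exponent `p`
over all `k`-wise independent Rademacher vectors of length `N` and unit vectors `a`. -/
def CNpk (N : ℕ) (p : ℝ) (k : ℕ) : ℝ :=
  sSup {x : ℝ | ∃ (Ω : Type) (_ : MeasurableSpace Ω) (μ : Measure Ω),
    IsProbabilityMeasure μ ∧ ∃ (ε : Fin N → Ω → ℝ) (a : Fin N → ℝ),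
      IsKWiseRademacher μ k ε ∧ (∑ i, (a i) ^ 2 = 1) ∧
      x = (∫ ω, |∑ i, a i * ε i ω| ^ p ∂μ) ^ (1 / p)}

lemma prod_one_add_mul_div_two_eq_ite {ι : Type*} {s : Finset ι} {e σ : ι → ℝ}
    (he : ∀ i ∈ s, e i = 1 ∨ e i = -1) (hσ : ∀ i, σ i = 1 ∨ σ i = -1) :
    ∏ i ∈ s, (1 + σ i * e i) / 2 = if ∀ i ∈ s, e i = σ i then 1 else 0 := by
  rw [← Finset.prod_boole]
  refine Finset.prod_congr rfl fun i hi => ?_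
  rcases he i hi with h | h <;> rcases hσ i with h' | h' <;> norm_num [h, h']

lemma Nat.sub_half_of_even {n : ℕ} (hn : Even n) : n - n / 2 = n / 2 := by
  obtain ⟨m, rfl⟩ := hn
  omega

lemma abs_sum_mul_le_sqrt {ι : Type*} {s : Finset ι} {a e : ι → ℝ} (he : ∀ i ∈ s, |e i| ≤ 1) :
    |∑ i ∈ s, a i * e i| ≤ √(s.card * ∑ i ∈ s, a i ^ 2) := calc
  |∑ i ∈ s, a i * e i| ≤ ∑ i ∈ s, |a i| := (Finset.abs_sum_le_sum_abs _ _).trans <|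
    Finset.sum_le_sum fun i hi => by
      rw [abs_mul]; exact mul_le_of_le_one_right (abs_nonneg _) (he i hi)
  _ ≤ √(s.card * ∑ i ∈ s, a i ^ 2) := Real.le_sqrt_of_sq_le <| by
    simpa using sq_sum_le_card_mul_sum_sq (s := s) (f := fun i => |a i|)

lemma abs_rpow_le_rpow_mul_sq {x M p : ℝ} (hx : |x| ≤ M) (hp : 2 ≤ p) :
    |x| ^ p ≤ M ^ (p - 2) * x ^ 2 := by
  calc |x| ^ p = |x| ^ (p - 2) * |x| ^ (2 : ℝ) := by
        rw [← Real.rpow_add' (abs_nonneg x) (by linarith), sub_add_cancel]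
    _ ≤ M ^ (p - 2) * x ^ 2 := by
        rw [Real.rpow_two, sq_abs]
        exact mul_le_mul_of_nonneg_right
          (Real.rpow_le_rpow (abs_nonneg x) hx (by linarith)) (sq_nonneg x)

section SignPatterns

variable {Ω ι : Type*} [MeasurableSpace Ω] {μ : Measure Ω} [IsFiniteMeasure μ] {ε : ι → Ω → ℝ}

lemma integrable_prod_of_ae_sign (hm : ∀ i, Measurable (ε i))
    (hpm : ∀ i, ∀ᵐ ω ∂μ, ε i ω = 1 ∨ ε i ω = -1) (B : Finset ι) :
    Integrable (fun ω => ∏ i ∈ B, ε i ω) μ := by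
  refine .of_bound (Finset.measurable_prod _ fun i _ => hm i).aestronglyMeasurable 1 ?_
  filter_upwards [(Filter.eventually_all_finset B).2 fun i _ => hpm i] with ω hω
  rw [norm_prod, Finset.prod_eq_one fun i hi => ?_]
  rcases hω i hi with h | h <;> simp [h]

lemma measureReal_sign_pattern_eq (hm : ∀ i, Measurable (ε i))
    (hpm : ∀ i, ∀ᵐ ω ∂μ, ε i ω = 1 ∨ ε i ω = -1) (s : Finset ι) {σ : ι → ℝ}
    (hσ : ∀ i, σ i = 1 ∨ σ i = -1) :
    μ.real {ω | ∀ i ∈ s, ε i ω = σ i} =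
      2⁻¹ ^ s.card * ∑ B ∈ s.powerset, (∏ i ∈ B, σ i) * ∫ ω, ∏ i ∈ B, ε i ω ∂μ := by
  have hmeas : MeasurableSet {ω | ∀ i ∈ s, ε i ω = σ i} := by
    simp only [Set.ofPred_forall]
    exact .biInter s.countable_toSet fun i _ => hm i (measurableSet_singleton _)
  have hind : {ω | ∀ i ∈ s, ε i ω = σ i}.indicator 1 =ᵐ[μ]
      fun ω => 2⁻¹ ^ s.card * ∑ B ∈ s.powerset, (∏ i ∈ B, σ i) * ∏ i ∈ B, ε i ω := by
    filter_upwards [(Filter.eventually_all_finset s).2 fun i _ => hpm i] with ω hω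
    simp only [Set.indicator_apply, Set.mem_ofPred_eq, Pi.one_apply]
    rw [← prod_one_add_mul_div_two_eq_ite hω hσ, Finset.prod_div_distrib, Finset.prod_const,
      Finset.prod_one_add, div_eq_inv_mul, inv_pow]
    simp only [Finset.prod_mul_distrib]
  rw [← integral_indicator_one hmeas, integral_congr_ae hind, integral_const_mul,
    integral_finsetSum _ fun B _ => (integrable_prod_of_ae_sign hm hpm B).const_mul _]
  simp only [integral_const_mul]

end SignPatterns

namespace IsKWiseRademacher

variable {Ω ι : Type*} [MeasurableSpace Ω] {μ : Measure Ω} {ε : ι → Ω → ℝ} [DecidableEq ι]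
  {k : ℕ}

lemma measure_setOf_eq_sign (hε : IsKWiseRademacher μ k ε) (hk : 1 ≤ k) (i : ι) {c : ℝ}
    (hc : c = 1 ∨ c = -1) :
    μ {ω | ε i ω = c} = 2⁻¹ := by
  simpa using hε.2 {i} (by simpa using hk) (fun _ => c) fun _ => hc

variable [IsProbabilityMeasure μ]

theorem of_integral_prod_eq_zero (hm : ∀ i, Measurable (ε i))
    (hpm : ∀ i, ∀ᵐ ω ∂μ, ε i ω = 1 ∨ ε i ω = -1)
    (hmom : ∀ B : Finset ι, B.Nonempty → B.card ≤ k → ∫ ω, ∏ i ∈ B, ε i ω ∂μ = 0) :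
    IsKWiseRademacher μ k ε := by
  refine ⟨hm, fun s hs σ hσ => ?_⟩
  rw [← ofReal_measureReal, measureReal_sign_pattern_eq hm hpm s hσ, Finset.sum_eq_single ∅
    (fun B hB hne => by
      rw [hmom B (Finset.nonempty_iff_ne_empty.2 hne)
        ((Finset.card_le_card (Finset.mem_powerset.1 hB)).trans hs), mul_zero])
    fun h => (h s.empty_mem_powerset).elim]
  simp [ENNReal.ofReal_pow, ENNReal.inv_pow]

lemma ae_eq_one_or_neg_one (hε : IsKWiseRademacher μ k ε) (hk : 1 ≤ k) (i : ι) :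
    ∀ᵐ ω ∂μ, ε i ω = 1 ∨ ε i ω = -1 := by
  have hmeas (c : ℝ) : MeasurableSet {ω | ε i ω = c} := hε.1 i (measurableSet_singleton c)
  refine (ae_iff_measure_eq (p := fun ω => ε i ω = 1 ∨ ε i ω = -1)
    ((hmeas 1).union (hmeas (-1))).nullMeasurableSet).2 ?_
  rw [Set.ofPred_or, measure_union _ (hmeas _), hε.measure_setOf_eq_sign hk i (.inl rfl),
    hε.measure_setOf_eq_sign hk i (.inr rfl), ENNReal.inv_two_add_inv_two, measure_univ]
  exact Set.disjoint_left.2 fun ω h1 h2 => by norm_num [Set.mem_ofPred_eq ▸ h1] at h2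

lemma integral_prod_eq_zero (hε : IsKWiseRademacher μ k ε)
    {B : Finset ι} (hB : B.Nonempty) (hBk : B.card ≤ k) : ∫ ω, ∏ i ∈ B, ε i ω ∂μ = 0 := by
  have hpm := hε.ae_eq_one_or_neg_one (hB.card_pos.trans_le hBk)
  induction B using Finset.strongInduction with
  | H B ih =>
    have hcyl := measureReal_sign_pattern_eq hε.1 hpm B (σ := fun _ => 1) fun _ => .inl rfl
    rw [measureReal_def, hε.2 B hBk _ fun _ => .inl rfl, Finset.sum_eq_add_of_mem ∅ B
      (Finset.empty_mem_powerset B) (Finset.mem_powerset_self B) hB.ne_empty.symm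
      fun C hC hne => by
        have hCB := Finset.ssubset_iff_subset_ne.2 ⟨Finset.mem_powerset.1 hC, hne.2⟩
        rw [ih C hCB (Finset.nonempty_iff_ne_empty.2 hne.1)
          ((Finset.card_le_card hCB.subset).trans hBk), mul_zero]] at hcyl
    simpa using hcyl

lemma integrable_mul (hε : IsKWiseRademacher μ k ε) (hk : 1 ≤ k) (i j : ι) :
    Integrable (fun ω => ε i ω * ε j ω) μ := by
  refine .of_bound ((hε.1 i).mul (hε.1 j)).aestronglyMeasurable 1 ?_
  filter_upwards [hε.ae_eq_one_or_neg_one hk i, hε.ae_eq_one_or_neg_one hk j] with ω hi hj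
  rcases hi with h | h <;> rcases hj with h' | h' <;> simp [h, h']

lemma integral_mul (hε : IsKWiseRademacher μ k ε) (hk : 2 ≤ k)
    (i j : ι) : ∫ ω, ε i ω * ε j ω ∂μ = if i = j then 1 else 0 := by
  split_ifs with hij
  · subst hij
    rw [integral_congr_ae (g := fun _ => 1), integral_const, probReal_univ, one_smul]
    filter_upwards [hε.ae_eq_one_or_neg_one (by omega) i] with ω h
    rcases h with h | h <;> simp [h]
  · simpa [Finset.prod_pair hij] using
      hε.integral_prod_eq_zero (B := {i, j}) (by simp) (by rwa [Finset.card_pair hij])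

lemma integral_sq_sum [Fintype ι] (hε : IsKWiseRademacher μ k ε)
    (hk : 2 ≤ k) (a : ι → ℝ) : ∫ ω, (∑ i, a i * ε i ω) ^ 2 ∂μ = ∑ i, a i ^ 2 := by
  have hint (i j : ι) : Integrable (fun ω => a i * a j * (ε i ω * ε j ω)) μ :=
    (hε.integrable_mul (by omega) i j).const_mul _
  have hexp (ω : Ω) :
      (∑ i, a i * ε i ω) ^ 2 = ∑ i, ∑ j, a i * a j * (ε i ω * ε j ω) := by
    simp_rw [sq, Finset.sum_mul_sum, mul_mul_mul_comm]
  simp_rw [hexp]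
  rw [integral_finsetSum _ fun i _ => integrable_finsetSum _ fun j _ => hint i j]
  simp_rw [integral_finsetSum _ fun j _ => hint _ j, integral_const_mul, hε.integral_mul hk,
    mul_ite, mul_one, mul_zero, Finset.sum_ite_eq, Finset.mem_univ, if_true, sq]

theorem integral_rpow_abs_sum_le [Fintype ι] (hε : IsKWiseRademacher μ k ε) (hk : 2 ≤ k)
    {a : ι → ℝ} (ha : ∑ i, a i ^ 2 = 1) {p : ℝ} (hp : 2 ≤ p) :
    ∫ ω, |∑ i, a i * ε i ω| ^ p ∂μ ≤ (Fintype.card ι : ℝ) ^ (p / 2 - 1) := by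
  have hbound : ∀ᵐ ω ∂μ, |∑ i, a i * ε i ω| ≤ √(Fintype.card ι : ℝ) := by
    filter_upwards [Filter.eventually_all.2 (hε.ae_eq_one_or_neg_one (by omega))] with ω hω
    simpa [ha] using abs_sum_mul_le_sqrt (s := .univ) (a := a) fun i _ => by
      rcases hω i with h | h <;> simp [h]
  have hmeas : Measurable fun ω => ∑ i, a i * ε i ω :=
    Finset.measurable_sum _ fun i _ => (hε.1 i).const_mul (a i)
  have hint : Integrable (fun ω => (∑ i, a i * ε i ω) ^ 2) μ := by
    refine .of_bound (hmeas.pow_const 2).aestronglyMeasurable (Fintype.card ι) ?_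
    filter_upwards [hbound] with ω hω
    rw [Real.norm_eq_abs, abs_pow]
    exact (pow_le_pow_left₀ (abs_nonneg _) hω 2).trans (Real.sq_sqrt (Nat.cast_nonneg _)).le
  calc ∫ ω, |∑ i, a i * ε i ω| ^ p ∂μ
        ≤ ∫ ω, √(Fintype.card ι : ℝ) ^ (p - 2) * (∑ i, a i * ε i ω) ^ 2 ∂μ :=
        integral_mono_of_nonneg (.of_forall fun ω => by positivity) (hint.const_mul _)
          (hbound.mono fun ω hω => abs_rpow_le_rpow_mul_sq hω hp)
    _ = (Fintype.card ι : ℝ) ^ (p / 2 - 1) := by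
        rw [integral_const_mul, hε.integral_sq_sum hk, ha, mul_one, Real.sqrt_eq_rpow,
          ← Real.rpow_mul (Nat.cast_nonneg _)]
        ring_nf

end IsKWiseRademacher

section SignVectors

open Finset

variable {N : ℕ}

def signVec (T : Finset (Fin N)) : Fin N → ℝ := fun i => if i ∈ T then 1 else -1

lemma sum_powersetCard_signVec_comp_perm (n : ℕ) (π : Equiv.Perm (Fin N))
    (f : (Fin N → ℝ) → ℝ) :
    ∑ T ∈ powersetCard n univ, f (signVec T ∘ π) = ∑ T ∈ powersetCard n univ, f (signVec T) := by
  refine sum_equiv π.symm.finsetCongr (by simp) fun T _ => congrArg f (funext fun i => ?_)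
  simp [signVec, Equiv.finsetCongr_apply, mem_map_equiv]

lemma sum_powersetCard_half_neg_signVec (hN : Even N) (f : (Fin N → ℝ) → ℝ) :
    ∑ T ∈ powersetCard (N / 2) univ, f (-signVec T) =
      ∑ T ∈ powersetCard (N / 2) univ, f (signVec T) := by
  refine sum_nbij' compl compl (fun T hT => ?_) (fun T hT => ?_) (fun T _ => compl_compl T)
    (fun T _ => compl_compl T) fun T _ => congrArg f (funext fun i => ?_)
  · simp_all [card_compl, Nat.sub_half_of_even hN]
  · simp_all [card_compl, Nat.sub_half_of_even hN]
  · by_cases h : i ∈ T <;> simp [signVec, h]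

lemma sum_signVec_eq_zero (hN : Even N) {T : Finset (Fin N)} (hT : T.card = N / 2) :
    ∑ i, signVec T i = 0 := by
  simp [signVec, sum_ite, filter_not, ← compl_eq_univ_sdiff, card_compl, hT,
    Nat.sub_half_of_even hN]

lemma sum_powersetCard_half_prod_signVec_of_odd (hN : Even N) {B : Finset (Fin N)}
    (hB : Odd B.card) : ∑ T ∈ powersetCard (N / 2) univ, ∏ i ∈ B, signVec T i = 0 := by
  have h := sum_powersetCard_half_neg_signVec hN fun x => ∏ i ∈ B, x i
  simp only [Pi.neg_apply, prod_neg, hB.neg_one_pow, neg_one_mul, sum_neg_distrib] at h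
  linarith

lemma sub_one_mul_sum_powersetCard_half_signVec_mul (hN : Even N) {i j : Fin N} (hij : i ≠ j) :
    ((N : ℝ) - 1) * ∑ T ∈ powersetCard (N / 2) univ, signVec T i * signVec T j =
      -(N.choose (N / 2) : ℝ) := by
  set g : Fin N → ℝ := fun l => ∑ T ∈ powersetCard (N / 2) univ, signVec T i * signVec T l
  -- the transposition of `l` and `j` fixes `i` and permutes the balanced sets
  have hswap (l : Fin N) (hl : l ≠ i) : g l = g j := by
    simpa [Equiv.swap_apply_of_ne_of_ne hl.symm hij] using
      sum_powersetCard_signVec_comp_perm (N / 2) (Equiv.swap l j) fun x => x i * x j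
  have hsum : ∑ l, g l = 0 := by
    rw [sum_comm]
    exact sum_eq_zero fun T hT => by
      rw [← mul_sum, sum_signVec_eq_zero hN (mem_powersetCard.1 hT).2, mul_zero]
  have hii : g i = N.choose (N / 2) := by
    have hsq (T : Finset (Fin N)) : signVec T i * signVec T i = 1 := by
      unfold signVec; split_ifs <;> norm_num
    simp [g, hsq]
  rw [← add_sum_erase _ _ (mem_univ i), hii,
    sum_congr rfl fun l hl => hswap l (ne_of_mem_erase hl), sum_const,
    card_erase_of_mem (mem_univ i), card_univ, Fintype.card_fin, nsmul_eq_mul,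
    Nat.cast_sub i.pos] at hsum
  push_cast at hsum
  linarith

end SignVectors

section PMeas

open Finset

variable {N : ℕ}

lemma PB_eq : PB N = ((N.choose (N / 2) : ℝ≥0∞))⁻¹ •
    ∑ T ∈ powersetCard (N / 2) univ, Measure.dirac (signVec T) := by
  rw [PB, powersetCard_eq_filter, powerset_univ]
  rfl

lemma integrable_PA (f : (Fin N → ℝ) → ℝ) : Integrable f (PA N) :=
  ((integrable_dirac (by simp)).add_measure (integrable_dirac (by simp))).smul_measure (by simp)

lemma integrable_PB (f : (Fin N → ℝ) → ℝ) : Integrable f (PB N) := by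
  rw [PB_eq]
  exact (integrable_finsetSum_measure.2 fun T _ => integrable_dirac (by simp)).smul_measure
    (by simp [(Nat.choose_pos (Nat.div_le_self N 2)).ne'])

lemma integral_PA (f : (Fin N → ℝ) → ℝ) :
    ∫ x, f x ∂PA N = (f (fun _ => 1) + f (fun _ => -1)) / 2 := by
  rw [PA, integral_smul_measure, integral_add_measure (integrable_dirac (by simp))
    (integrable_dirac (by simp)), integral_dirac, integral_dirac]
  simp [div_eq_inv_mul]

lemma integral_PB (f : (Fin N → ℝ) → ℝ) :
    ∫ x, f x ∂PB N = (∑ T ∈ powersetCard (N / 2) univ, f (signVec T)) / N.choose (N / 2) := by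
  rw [PB_eq, integral_smul_measure,
    integral_finsetSum_measure fun T _ => integrable_dirac (by simp)]
  simp [div_eq_inv_mul, integral_dirac]

lemma integral_PMeas (hN : 0 < N) (f : (Fin N → ℝ) → ℝ) :
    ∫ x, f x ∂PMeas N = (∫ x, f x ∂PA N) / N + (N - 1) / N * ∫ x, f x ∂PB N := by
  rw [PMeas, integral_add_measure ((integrable_PA f).smul_measure (by simp [hN.ne']))
    ((integrable_PB f).smul_measure (ENNReal.div_ne_top (by simp) (by simp [hN.ne']))),
    integral_smul_measure, integral_smul_measure]
  simp [ENNReal.toReal_sub_of_le (Nat.one_le_cast.2 hN) (by simp), div_eq_inv_mul]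

lemma isProbabilityMeasure_PMeas (hN : 0 < N) : IsProbabilityMeasure (PMeas N) := by
  have hPA : PA N Set.univ = 1 := by
    simp [PA, ENNReal.inv_two_add_inv_two]
  have hPB : PB N Set.univ = 1 := by
    simp [PB_eq, ENNReal.inv_mul_cancel, (Nat.choose_pos (Nat.div_le_self N 2)).ne']
  constructor
  rw [PMeas, Measure.add_apply, Measure.smul_apply, Measure.smul_apply, hPA, hPB, smul_eq_mul,
    smul_eq_mul, mul_one, mul_one, ← one_div, ENNReal.div_add_div_same,
    add_tsub_cancel_of_le (Nat.one_le_cast.2 hN), ENNReal.div_self (by simp [hN.ne']) (by simp)]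

lemma ae_PMeas_eq_one_or_neg_one (i : Fin N) : ∀ᵐ x ∂PMeas N, x i = 1 ∨ x i = -1 := by
  simp only [PMeas, PA, PB_eq, ae_add_measure_iff]
  refine ⟨Measure.ae_smul_measure (Measure.ae_smul_measure (ae_add_measure_iff.2 ⟨?_, ?_⟩) _) _,
    Measure.ae_smul_measure
      (Measure.ae_smul_measure (ae_finsetSum_measure_iff.2 fun T _ => ?_) _) _⟩
  all_goals simp only [ae_dirac_eq, Filter.eventually_pure, signVec]
  · simp
  · simp
  · by_cases h : i ∈ T <;> simp [h]

lemma integral_PMeas_prod_eq_zero (hN : 0 < N) (hNe : Even N) {B : Finset (Fin N)}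
    (hB : B.Nonempty) (hB3 : B.card ≤ 3) : ∫ x, ∏ i ∈ B, x i ∂PMeas N = 0 := by
  rw [integral_PMeas hN, integral_PA, integral_PB]
  by_cases h2 : B.card = 2
  · obtain ⟨i, j, hij, rfl⟩ := card_eq_two.1 h2
    have hpair := sub_one_mul_sum_powersetCard_half_signVec_mul hNe hij
    have hC : (N.choose (N / 2) : ℝ) ≠ 0 := by
      exact_mod_cast (Nat.choose_pos (Nat.div_le_self N 2)).ne'
    simp only [prod_pair hij]
    field_simp
    linarith
  · have hodd : Odd B.card := Nat.odd_iff.2 (by have := hB.card_pos; omega)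
    simp [sum_powersetCard_half_prod_signVec_of_odd hNe hodd, hodd.neg_one_pow]

lemma integral_PMeas_rpow_abs_sum (hN : 0 < N) (hNe : Even N) {p : ℝ} (hp : 0 < p) :
    ∫ x, |∑ i, (√N)⁻¹ * x i| ^ p ∂PMeas N = (N : ℝ) ^ (p / 2 - 1) := by
  have hPB (T : Finset (Fin N)) (hT : T ∈ powersetCard (N / 2) univ) :
      |∑ i, (√N)⁻¹ * signVec T i| ^ p = 0 := by
    rw [← mul_sum, sum_signVec_eq_zero hNe (mem_powersetCard.1 hT).2, mul_zero, abs_zero,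
      Real.zero_rpow hp.ne']
  have hPA (c : ℝ) (hc : |c| = 1) : |∑ _i : Fin N, (√N)⁻¹ * c| ^ p = (N : ℝ) ^ (p / 2) := by
    rw [sum_const, card_univ, Fintype.card_fin, nsmul_eq_mul, ← mul_assoc, ← div_eq_mul_inv,
      Real.div_sqrt, abs_mul, hc, mul_one, abs_of_nonneg (Real.sqrt_nonneg _), Real.sqrt_eq_rpow,
      ← Real.rpow_mul (Nat.cast_nonneg _)]
    ring_nf
  rw [integral_PMeas hN, integral_PA, integral_PB, sum_eq_zero hPB, hPA 1 (by simp),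
    hPA (-1) (by simp), Real.rpow_sub_one (by positivity)]
  ring

end PMeas

theorem isKWiseRademacher_PMeas {N : ℕ} (hN : 0 < N) (hNe : Even N) :
    IsKWiseRademacher (PMeas N) 3 (fun (i : Fin N) (x : Fin N → ℝ) => x i) :=
  have := isProbabilityMeasure_PMeas hN
  .of_integral_prod_eq_zero measurable_pi_apply ae_PMeas_eq_one_or_neg_one
    fun _ hB hB3 => integral_PMeas_prod_eq_zero hN hNe hB hB3

/-- the measure `P = (1/N)P_a + ((N-1)/N)P_b` is 3-wise independent
(every three distinct coordinates are jointly uniform on `{−1,1}³`); consequently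
`C(N,p,3) = N^{1/2-1/p}` for `N` even and `p ≥ 2`. -/
theorem PMeas_threewise_and_CNp3 {N : ℕ} (hN : 0 < N) (hNe : Even N) :
    IsKWiseRademacher (PMeas N) 3 (fun (i : Fin N) (x : Fin N → ℝ) => x i) ∧
    ∀ p : ℝ, 2 ≤ p → CNpk N p 3 = (N : ℝ) ^ ((1 : ℝ) / 2 - 1 / p) := by
  have hP := isKWiseRademacher_PMeas hN hNe
  refine ⟨hP, fun p hp => ?_⟩
  have hpow : ((N : ℝ) ^ (p / 2 - 1)) ^ (1 / p) = (N : ℝ) ^ ((1 : ℝ) / 2 - 1 / p) := by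
    rw [← Real.rpow_mul (Nat.cast_nonneg N)]
    congr 1
    field_simp
  refine IsGreatest.csSup_eq ⟨?_, ?_⟩
  · refine ⟨Fin N → ℝ, inferInstance, PMeas N, isProbabilityMeasure_PMeas hN, _,
      fun _ => (√N)⁻¹, hP, ?_, by rw [integral_PMeas_rpow_abs_sum hN hNe (by linarith), hpow]⟩
    simp [inv_pow, Real.sq_sqrt (Nat.cast_nonneg N), hN.ne']
  · rintro _ ⟨Ω, _, μ, _, ε, a, hε, ha, rfl⟩
    rw [← hpow]
    refine Real.rpow_le_rpow (integral_nonneg fun _ => by positivity) ?_ (by positivity)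
    simpa using hε.integral_rpow_abs_sum_le (by norm_num) ha hp
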